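/- The MWNSW fairness notion suffers from the inversion paradox for indivisible goods with additive valuations. Concretely, take 3 agents and 3 items e_1, e_2, e_3 with additive valuations v_1 = (2, 1, 0), v_2 = (0, 1, 5), v_3 = (1, 0, 4) (listing item values in order), and entitlement vectors b' = (1/3, 1/3, 1/3) and b = (13/20, 1/3, 1/60). Then b 1-improves b'; the unique allocation maximizing the weighted Nash social welfare ∏_i v_i(A_i)^{b'_i} under b' is ({e_1}, {e_2}, {e_3}), giving agent 1 value 2; and the unique allocation maximizing ∏_i v_i(A_i)^{b_i} under b is ({e_2}, {e_3}, {e_1}), giving agent 1 value only 1. Hence the unique MWNSW allocation under the larger entitlement gives agent 1 strictly less value. -/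

import Mathlib

namespace Stmt13

/-- A partition of the items into (possibly empty) bundles. -/
def IsPartition {n m : ℕ} (A : Fin n → Finset (Fin m)) : Prop :=
  (∀ i j, i ≠ j → Disjoint (A i) (A j)) ∧ ∀ e, ∃ i, e ∈ A i

/-- Additive value of a bundle. -/
def bval {m : ℕ} (w : Fin m → ℝ) (S : Finset (Fin m)) : ℝ := ∑ e ∈ S, w e

/-- The additive valuations: v₁ = (2,1,0), v₂ = (0,1,5), v₃ = (1,0,4). -/
def v : Fin 3 → Fin 3 → ℝ := ![![2, 1, 0], ![0, 1, 5], ![1, 0, 4]]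

/-- Entitlement vector b' = (1/3, 1/3, 1/3). -/
noncomputable def b' : Fin 3 → ℝ := ![1/3, 1/3, 1/3]

/-- Entitlement vector b = (13/20, 1/3, 1/60). -/
noncomputable def b : Fin 3 → ℝ := ![13/20, 1/3, 1/60]

/-- The weighted Nash social welfare of an allocation under entitlements `β`
(using real powers, with the convention `0 ^ βᵢ = 0` for `βᵢ > 0`). -/
noncomputable def wnsw (β : Fin 3 → ℝ) (A : Fin 3 → Finset (Fin 3)) : ℝ :=
  ∏ i, (bval (v i) (A i)) ^ (β i)

/-- Acceptable under MWNSW: a partition maximizing WNSW over all partitions. -/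
noncomputable def MwnswAcc (β : Fin 3 → ℝ) (A : Fin 3 → Finset (Fin 3)) : Prop :=
  IsPartition A ∧ ∀ B : Fin 3 → Finset (Fin 3), IsPartition B → wnsw β B ≤ wnsw β A

/-!
Agent `i` values exactly the items `i` and `i + 1` positively (indices mod 3), so any allocation
in which some agent receives no positively valued item has weighted Nash welfare `0`. With three
items this leaves only the two perfect matchings `i ↦ {i}` and `i ↦ {i + 1}`, of welfare
`2 ^ β₀ * 4 ^ β₂` and `5 ^ β₁`. Under `b'` the first wins (`8 > 5`); under `b` the second wins,
since `(2 ^ (13/20) * 4 ^ (1/60)) ^ 60 = 2 ^ 41 < 5 ^ 20`.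
-/

theorem mwnswAcc_unique {β : Fin 3 → ℝ} {A₀ : Fin 3 → Finset (Fin 3)} (h₀ : IsPartition A₀)
    (hlt : ∀ B, IsPartition B → B ≠ A₀ → wnsw β B < wnsw β A₀) :
    MwnswAcc β A₀ ∧ ∀ A, MwnswAcc β A → A = A₀ := by
  refine ⟨⟨h₀, fun B hB => ?_⟩, fun A hA => by_contra fun hne => ?_⟩
  · obtain rfl | hne := eq_or_ne B A₀
    exacts [le_rfl, (hlt B hB hne).le]
  · exact (hlt A hA.1 hne).not_ge (hA.2 A₀ h₀)

theorem isPartition_diag : IsPartition ![({0} : Finset (Fin 3)), {1}, {2}] := by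
  unfold IsPartition
  decide

theorem isPartition_shift : IsPartition ![({1} : Finset (Fin 3)), {2}, {0}] := by
  unfold IsPartition
  decide

theorem isPartition_cases (A : Fin 3 → Finset (Fin 3)) (hA : IsPartition A) :
    A = ![{0}, {1}, {2}] ∨ A = ![{1}, {2}, {0}] ∨ ∃ i, A i ⊆ {i + 2} := by
  revert A
  unfold IsPartition
  decide +kernel

theorem v_apply_add_two (i : Fin 3) : v i (i + 2) = 0 := by
  fin_cases i <;> rfl

theorem bval_eq_zero_of_subset {i : Fin 3} {S : Finset (Fin 3)} (hS : S ⊆ {i + 2}) :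
    bval (v i) S = 0 :=
  Finset.sum_eq_zero fun e he => by
    rw [Finset.mem_singleton.mp (hS he), v_apply_add_two]

theorem wnsw_eq_zero {β : Fin 3 → ℝ} {A : Fin 3 → Finset (Fin 3)} {i : Fin 3}
    (hβ : β i ≠ 0) (hA : bval (v i) (A i) = 0) : wnsw β A = 0 :=
  Finset.prod_eq_zero (Finset.mem_univ i) (by rw [hA, Real.zero_rpow hβ])

theorem wnsw_eq_zero_of_isPartition_of_ne {β : Fin 3 → ℝ} (hβ : ∀ i, β i ≠ 0)
    {A : Fin 3 → Finset (Fin 3)} (hA : IsPartition A)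
    (h₁ : A ≠ ![{0}, {1}, {2}]) (h₂ : A ≠ ![{1}, {2}, {0}]) : wnsw β A = 0 := by
  obtain rfl | rfl | ⟨i, hi⟩ := isPartition_cases A hA
  · exact absurd rfl h₁
  · exact absurd rfl h₂
  · exact wnsw_eq_zero (hβ i) (bval_eq_zero_of_subset hi)

theorem wnsw_diag (β : Fin 3 → ℝ) :
    wnsw β ![{0}, {1}, {2}] = 2 ^ β 0 * 4 ^ β 2 := by
  simp [wnsw, bval, v, Fin.prod_univ_three]

theorem wnsw_shift (β : Fin 3 → ℝ) :
    wnsw β ![{1}, {2}, {0}] = 5 ^ β 1 := by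
  simp [wnsw, bval, v, Fin.prod_univ_three]

theorem b'_ne_zero (i : Fin 3) : b' i ≠ 0 := by
  fin_cases i <;> norm_num [b']

theorem b_ne_zero (i : Fin 3) : b i ≠ 0 := by
  fin_cases i <;> norm_num [b]

theorem wnsw_b'_shift_lt_diag : wnsw b' ![{1}, {2}, {0}] < wnsw b' ![{0}, {1}, {2}] := by
  rw [wnsw_diag, wnsw_shift]
  show (5 : ℝ) ^ (1 / 3 : ℝ) < 2 ^ (1 / 3 : ℝ) * 4 ^ (1 / 3 : ℝ)
  rw [← Real.mul_rpow (by norm_num) (by norm_num)]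
  exact Real.rpow_lt_rpow (by norm_num) (by norm_num) (by norm_num)

theorem wnsw_b_diag_lt_shift : wnsw b ![{0}, {1}, {2}] < wnsw b ![{1}, {2}, {0}] := by
  rw [wnsw_diag, wnsw_shift]
  show (2 : ℝ) ^ (13 / 20 : ℝ) * 4 ^ (1 / 60 : ℝ) < 5 ^ (1 / 3 : ℝ)
  -- compare 60th powers: `2 ^ 39 * 4 < 5 ^ 20`
  refine lt_of_pow_lt_pow_left₀ 60 (by positivity) ?_
  rw [mul_pow, ← Real.rpow_mul_natCast (by norm_num), ← Real.rpow_mul_natCast (by norm_num),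
    ← Real.rpow_mul_natCast (by norm_num)]
  norm_num

theorem wnsw_b'_lt_diag {B : Fin 3 → Finset (Fin 3)} (hB : IsPartition B)
    (hne : B ≠ ![{0}, {1}, {2}]) : wnsw b' B < wnsw b' ![{0}, {1}, {2}] := by
  by_cases hshift : B = ![{1}, {2}, {0}]
  · exact hshift ▸ wnsw_b'_shift_lt_diag
  · rw [wnsw_eq_zero_of_isPartition_of_ne b'_ne_zero hB hne hshift, wnsw_diag]
    positivity

theorem wnsw_b_lt_shift {B : Fin 3 → Finset (Fin 3)} (hB : IsPartition B)
    (hne : B ≠ ![{1}, {2}, {0}]) : wnsw b B < wnsw b ![{1}, {2}, {0}] := by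
  by_cases hdiag : B = ![{0}, {1}, {2}]
  · exact hdiag ▸ wnsw_b_diag_lt_shift
  · rw [wnsw_eq_zero_of_isPartition_of_ne b_ne_zero hB hdiag hne, wnsw_shift]
    positivity

/-- MWNSW suffers from the inversion paradox: b 1-improves b',
yet the unique MWNSW allocation for b' is ({e₁},{e₂},{e₃}) giving agent 1
value 2, while the unique MWNSW allocation for b is ({e₂},{e₃},{e₁}) giving
agent 1 value only 1. -/
theorem stmt_13 :
    -- b 1-improves b'
    (b' 0 < b 0 ∧ ∀ j, j ≠ 0 → b j ≤ b' j) ∧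
    -- under b', the unique MWNSW allocation is ({e₁},{e₂},{e₃}); agent 1 gets value 2
    (MwnswAcc b' ![{0}, {1}, {2}] ∧
      (∀ A, MwnswAcc b' A → ∀ i, A i = ![({0} : Finset (Fin 3)), {1}, {2}] i) ∧
      bval (v 0) {0} = 2) ∧
    -- under b, the unique MWNSW allocation is ({e₂},{e₃},{e₁}); agent 1 gets value 1
    (MwnswAcc b ![{1}, {2}, {0}] ∧
      (∀ A, MwnswAcc b A → ∀ i, A i = ![({1} : Finset (Fin 3)), {2}, {0}] i) ∧
      bval (v 0) {1} = 1) := by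
  obtain ⟨acc', uniq'⟩ := mwnswAcc_unique isPartition_diag fun B hB => wnsw_b'_lt_diag hB
  obtain ⟨acc, uniq⟩ := mwnswAcc_unique isPartition_shift fun B hB => wnsw_b_lt_shift hB
  refine ⟨by norm_num [Fin.forall_fin_succ, b, b'],
    ⟨acc', fun A hA => congrFun (uniq' A hA), by simp [bval, v]⟩,
    ⟨acc, fun A hA => congrFun (uniq A hA), by simp [bval, v]⟩⟩

end Stmt13
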